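/- Let G be a group, let g ≥ 4, and let a_1,…,a_{g−1}, u_1 be elements of G satisfying: a_i a_j = a_j a_i for |i−j|>1; a_i a_{i+1} a_i = a_{i+1} a_i a_{i+1} for i=1,…,g−2; and u_1 a_i = a_i u_1 for i=3,…,g−1. Set M = a_1 a_2 ⋯ a_{g−1}. Then for every k with 2 ≤ k ≤ g−2, the element u_1 commutes with M^k u_1 M^{−k} if and only if u_1 commutes with M^2 u_1 M^{−2}. -/

import Mathlib

/-!
The element `M = a₁ ⋯ a_{g-1}` shifts the generators, `M aᵢ M⁻¹ = aᵢ₊₁`, by the braid and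
far-commutation relations. Writing `M = (a₁ a₂) T` with `T = a₃ ⋯ a_{g-1}` commuting with `u₁`, this
gives `M^{k+1} u₁ M^{-(k+1)} = c (Mᵏ u₁ M⁻ᵏ) c⁻¹` with `c = a_{k+1} a_{k+2}`. For `k ≥ 2` the
conjugator `c` commutes with `u₁`, so whether `u₁` commutes with `Mᵏ u₁ M⁻ᵏ` does not depend on `k`.
-/

section Group

variable {G : Type*} [Group G]

theorem commute_conj_iff_of_commute {u v P : G} (hP : Commute P u) :
    Commute u (P * v * P⁻¹) ↔ Commute u v := by
  conv_rhs => rw [← Commute.conj_iff P]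
  rw [hP.eq, mul_inv_cancel_right]

theorem semiconjBy_of_braid {x y L R : G} (hxy : x * y * x = y * x * y) (hxR : Commute x R)
    (hyL : Commute y L) : SemiconjBy (L * (x * y) * R) x y := by
  calc L * (x * y) * R * x = L * (x * y * x) * R := by rw [mul_assoc _ R, ← hxR.eq]; group
    _ = L * y * (x * y * R) := by rw [hxy]; group
    _ = y * (L * (x * y) * R) := by rw [← hyL.eq]; group

theorem semiconjBy_pow_of_shift {M : G} {a : ℕ → G} {lo hi : ℕ}
    (h : ∀ i, lo ≤ i → i < hi → SemiconjBy M (a i) (a (i + 1))) (k : ℕ) :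
    ∀ i, lo ≤ i → i + k ≤ hi → SemiconjBy (M ^ k) (a i) (a (i + k)) := by
  induction k with
  | zero => intro i _ _; simp
  | succ k ih =>
    intro i hlo hhi
    rw [pow_succ, ← add_assoc, add_right_comm]
    exact (ih (i + 1) (by omega) (by omega)).mul_left (h i hlo (by omega))

theorem commute_prod_map_range' {x : G} {a : ℕ → G} {s n : ℕ}
    (h : ∀ j, s ≤ j → j < s + n → Commute x (a j)) :
    Commute x ((List.range' s n).map a).prod := by
  refine Commute.list_prod_right _ _ fun y hy => ?_
  obtain ⟨j, hj, rfl⟩ := List.mem_map.mp hy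
  rw [List.mem_range'_1] at hj
  exact h j hj.1 hj.2

theorem prod_map_range'_eq_mul_mul (a : ℕ → G) (s m r : ℕ) :
    ((List.range' s (m + 2 + r)).map a).prod =
      ((List.range' s m).map a).prod * (a (s + m) * a (s + m + 1)) *
        ((List.range' (s + m + 2) r).map a).prod := by
  rw [← List.range'_append_1, ← List.range'_append_1 (m := m)]
  simp [List.range'_succ, mul_assoc, add_assoc]

end Group

section Braid

variable {G : Type*} [Group G] {a : ℕ → G} {n : ℕ}

theorem semiconjBy_prod_map_range'
    (hfar : ∀ i j, 1 ≤ i → j ≤ n → i + 1 < j → Commute (a i) (a j))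
    (hbraid : ∀ i, 1 ≤ i → i + 1 ≤ n → a i * a (i + 1) * a i = a (i + 1) * a i * a (i + 1))
    {i : ℕ} (hi : 1 ≤ i) (hin : i + 1 ≤ n) :
    SemiconjBy ((List.range' 1 n).map a).prod (a i) (a (i + 1)) := by
  obtain ⟨m, rfl⟩ : ∃ m, i = 1 + m := ⟨i - 1, by omega⟩
  obtain ⟨r, rfl⟩ : ∃ r, n = m + 2 + r := ⟨n - m - 2, by omega⟩
  rw [prod_map_range'_eq_mul_mul]
  refine semiconjBy_of_braid (hbraid _ hi hin) (commute_prod_map_range' fun j hj hjr => ?_)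
    (commute_prod_map_range' fun j hj hjm => ?_)
  · exact hfar _ j hi (by omega) (by omega)
  · exact (hfar j _ hj (by omega) (by omega)).symm

theorem conj_pow_succ_eq_conj {M T u : G} (hM : M = a 1 * a 2 * T) (hTu : Commute T u)
    (hshift : ∀ i, 1 ≤ i → i < n → SemiconjBy M (a i) (a (i + 1))) {k : ℕ} (hk : k + 2 ≤ n) :
    M ^ (k + 1) * u * (M ^ (k + 1))⁻¹ =
      (a (k + 1) * a (k + 2)) * (M ^ k * u * (M ^ k)⁻¹) * (a (k + 1) * a (k + 2))⁻¹ := by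
  have hc : SemiconjBy (M ^ k) (a 1 * a 2) (a (k + 1) * a (k + 2)) := by
    rw [add_comm k, add_comm k]
    exact (semiconjBy_pow_of_shift hshift k 1 le_rfl (by omega)).mul_right
      (semiconjBy_pow_of_shift hshift k 2 (by omega) (by omega))
  calc M ^ (k + 1) * u * (M ^ (k + 1))⁻¹
      = M ^ k * (a 1 * a 2) * (T * u * T⁻¹) * (M ^ k * (a 1 * a 2))⁻¹ := by
        rw [pow_succ, hM]; group
    _ = (a (k + 1) * a (k + 2)) * (M ^ k * u * (M ^ k)⁻¹) * (a (k + 1) * a (k + 2))⁻¹ := by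
        rw [hc.eq, hTu.eq, mul_inv_cancel_right]; group

end Braid

theorem stmt_8_general {G : Type*} [Group G] (g : ℕ) (a : ℕ → G) (u1 : G)
    (hA1 : ∀ i j, 1 ≤ i → j ≤ g - 1 → i + 1 < j → a i * a j = a j * a i)
    (hA2 : ∀ i, 1 ≤ i → i ≤ g - 2 → a i * a (i + 1) * a i = a (i + 1) * a i * a (i + 1))
    (hC1' : ∀ i, 3 ≤ i → i ≤ g - 1 → u1 * a i = a i * u1)
    (M : G) (hM : M = ((List.range' 1 (g - 1)).map a).prod) :
    ∀ k, 2 ≤ k → k ≤ g - 2 →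
      (u1 * (M ^ k * u1 * (M ^ k)⁻¹) = (M ^ k * u1 * (M ^ k)⁻¹) * u1 ↔
        u1 * (M ^ 2 * u1 * (M ^ 2)⁻¹) = (M ^ 2 * u1 * (M ^ 2)⁻¹) * u1) := by
  intro k hk2
  induction k, hk2 using Nat.le_induction with
  | base => exact fun _ => Iff.rfl
  | succ k hk2 ih =>
    intro hk
    have hshift : ∀ i, 1 ≤ i → i < g - 1 → SemiconjBy M (a i) (a (i + 1)) := fun i hi hig =>
      hM ▸ semiconjBy_prod_map_range' hA1 (fun i hi hig => hA2 i hi (by omega)) hi hig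
    have hsplit : M = a 1 * a 2 * ((List.range' 3 (g - 3)).map a).prod := by
      rw [hM, show g - 1 = 0 + 2 + (g - 3) by omega, prod_map_range'_eq_mul_mul]
      simp
    have hTu : Commute ((List.range' 3 (g - 3)).map a).prod u1 :=
      (commute_prod_map_range' fun j hj hjg => hC1' j hj (by omega)).symm
    have hcu : Commute (a (k + 1) * a (k + 2)) u1 :=
      (Commute.mul_right (hC1' _ (by omega) (by omega)) (hC1' _ (by omega) (by omega))).symm
    change Commute _ _ ↔ Commute _ _
    rw [conj_pow_succ_eq_conj hsplit hTu hshift (by omega), commute_conj_iff_of_commute hcu]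
    exact ih (by omega)

/-- the commutation of `u₁` with `Mᵏ u₁ M⁻ᵏ` reduces to the case `k = 2`. -/
theorem stmt_8 {G : Type*} [Group G] (g : ℕ) (hg : 4 ≤ g) (a : ℕ → G) (u1 : G)
    (hA1 : ∀ i j, 1 ≤ i → j ≤ g - 1 → i + 1 < j → a i * a j = a j * a i)
    (hA2 : ∀ i, 1 ≤ i → i ≤ g - 2 → a i * a (i + 1) * a i = a (i + 1) * a i * a (i + 1))
    (hC1' : ∀ i, 3 ≤ i → i ≤ g - 1 → u1 * a i = a i * u1)
    (M : G) (hM : M = ((List.range' 1 (g - 1)).map a).prod) :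
    ∀ k, 2 ≤ k → k ≤ g - 2 →
      (u1 * (M ^ k * u1 * (M ^ k)⁻¹) = (M ^ k * u1 * (M ^ k)⁻¹) * u1 ↔
        u1 * (M ^ 2 * u1 * (M ^ 2)⁻¹) = (M ^ 2 * u1 * (M ^ 2)⁻¹) * u1) :=
  stmt_8_general g a u1 hA1 hA2 hC1' M hM
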